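/- Let d ≥ 1, δ > 0, let μ be a finite nonnegative Borel measure on [0,δ], let K ≥ 0 and let b : ℝ^d × ℝ^d → ℝ^d satisfy ‖b(x,y) − b(x̃,ỹ)‖ ≤ K(‖x−x̃‖ + ‖y−ỹ‖) for all x, x̃, y, ỹ ∈ ℝ^d. Let φ, φ̃ : [−δ,0] → ℝ^d be continuous, and let x, x̃ : [−δ,1] → ℝ^d be continuous with x(t) = φ(t) and x̃(t) = φ̃(t) on [−δ,0], and x(t) = φ(0) + ∫₀^t b(x(s), ∫₀^δ x(s−u) μ(du)) ds, x̃(t) = φ̃(0) + ∫₀^t b(x̃(s), ∫₀^δ x̃(s−u) μ(du)) ds for all t ∈ [0,1]. Then sup_{t∈[−δ,1]} ‖x(t) − x̃(t)‖ ≤ exp(K(1 + μ([0,δ]))) · sup_{t∈[−δ,0]} ‖φ(t) − φ̃(t)‖. -/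

import Mathlib

/-!
Let `g t = sup_{[-δ, t]} ‖x - x'‖` be the running maximum of the distance of the two solutions.
Subtracting the two integral equations and using the Lipschitz bound on `b` together with
`‖H(F) - H(G)‖ ≤ μ([0, δ]) sup ‖F - G‖` gives, for `t ∈ [0, 1]`,
`g t ≤ A + ∫₀ᵗ K (1 + μ([0, δ])) g s ds`, where `A` is the sup-distance of the initial paths: a
time `r ≤ 0` is controlled by `A` directly, a time `r ∈ (0, t]` by the integral equation up to `r`.
Grönwall's inequality in integral form then yields `g 1 ≤ exp (K (1 + μ([0, δ]))) A`.
-/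

open MeasureTheory Set Real

section Primitive

variable {E : Type*} [NormedAddCommGroup E] [NormedSpace ℝ E] {f : ℝ → E} {a b : ℝ}

theorem continuousOn_primitive_Icc (hab : a ≤ b) (hf : IntegrableOn f (Icc a b)) :
    ContinuousOn (fun t => ∫ s in a..t, f s) (Icc a b) := by
  simpa only [uIcc_of_le hab] using
    intervalIntegral.continuousOn_primitive_interval (a := a) (b := b) (by rwa [uIcc_of_le hab])

theorem hasDerivWithinAt_primitive_Ici [CompleteSpace E] (hf : ContinuousOn f (Icc a b)) {t : ℝ}
    (ht : t ∈ Ico a b) : HasDerivWithinAt (fun u => ∫ s in a..u, f s) (f t) (Ici t) t := by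
  have : Fact (t ∈ Icc a b) := ⟨Ico_subset_Icc_self ht⟩
  refine HasDerivWithinAt.mono_of_mem_nhdsWithin ?_ (Icc_mem_nhdsGE_of_mem ht)
  exact intervalIntegral.integral_hasDerivWithinAt_right
    ((hf.mono (uIcc_subset_Icc (left_mem_Icc.2 (ht.1.trans ht.2.le)) this.out)).intervalIntegrable)
    (hf.stronglyMeasurableAtFilter_nhdsWithin measurableSet_Icc t) (hf.continuousWithinAt this.out)

end Primitive

theorem le_mul_exp_of_le_add_integral {g : ℝ → ℝ} {a b A C : ℝ} (hC : 0 ≤ C)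
    (hg : IntegrableOn g (Icc a b)) (h : ∀ t ∈ Icc a b, g t ≤ A + ∫ s in a..t, C * g s) :
    ∀ t ∈ Icc a b, g t ≤ A * exp (C * (t - a)) := by
  intro t ht
  have hab : a ≤ b := ht.1.trans ht.2
  have hsub : ∀ t ∈ Icc a b, uIcc a t ⊆ Icc a b := fun t ht =>
    uIcc_subset_Icc (left_mem_Icc.2 hab) ht
  have hCg : IntegrableOn (fun s => C * g s) (Icc a b) := hg.const_mul C
  -- `G` need not be differentiable, so we apply Grönwall's differential inequality to the
  -- `C¹` majorant `H` obtained by integrating once more.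
  set G := fun t => A + ∫ s in a..t, C * g s
  have hCG : ContinuousOn (fun s => C * G s) (Icc a b) :=
    continuousOn_const.mul (continuousOn_const.add (continuousOn_primitive_Icc hab hCg))
  set H := fun t => A + ∫ s in a..t, C * G s
  have hGH : ∀ t ∈ Icc a b, G t ≤ H t := fun t ht =>
    add_le_add_right (intervalIntegral.integral_mono_on ht.1
      (hCg.mono_set (hsub t ht)).intervalIntegrable
      (hCG.integrableOn_Icc.mono_set (hsub t ht)).intervalIntegrable
      fun s hs => mul_le_mul_of_nonneg_left (h s ⟨hs.1, hs.2.trans ht.2⟩) hC) A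
  have hH : ∀ t ∈ Icc a b, H t ≤ gronwallBound A C 0 (t - a) :=
    le_gronwallBound_of_liminf_deriv_right_le
      (continuousOn_const.add (continuousOn_primitive_Icc hab hCG.integrableOn_Icc))
      (fun t ht _ hr =>
        ((hasDerivWithinAt_primitive_Ici hCG ht).const_add A).liminf_right_slope_le hr)
      (by simp [H]) fun t ht => by
        simpa using mul_le_mul_of_nonneg_left (hGH t (Ico_subset_Icc_self ht)) hC
  calc g t ≤ G t := h t ht
    _ ≤ H t := hGH t ht
    _ ≤ gronwallBound A C 0 (t - a) := hH t ht
    _ = A * exp (C * (t - a)) := gronwallBound_ε0 _ _ _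

theorem monotoneOn_sSup_image_Icc {f : ℝ → ℝ} {a T : ℝ} (hf : BddAbove (f '' Icc a T)) :
    MonotoneOn (fun t => sSup (f '' Icc a t)) (Icc a T) := fun _ hs _ ht hst =>
  csSup_le_csSup (hf.mono (image_mono (Icc_subset_Icc_right ht.2))) ((nonempty_Icc.2 hs.1).image f)
    (image_mono (Icc_subset_Icc_right hst))

theorem sSup_image_Icc_le_mul_exp {f : ℝ → ℝ} {a T A C : ℝ} (ha : a ≤ 0) (hC : 0 ≤ C)
    (hf : ContinuousOn f (Icc a T)) (hf₀ : ∀ t ∈ Icc a T, 0 ≤ f t)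
    (hinit : ∀ t ∈ Icc a 0, f t ≤ A)
    (hint : ∀ t ∈ Icc 0 T, f t ≤ A + ∫ s in 0..t, C * sSup (f '' Icc a s)) :
    ∀ t ∈ Icc 0 T, sSup (f '' Icc a t) ≤ A * exp (C * t) := by
  set g := fun t => sSup (f '' Icc a t)
  have hbdd : ∀ t ≤ T, BddAbove (f '' Icc a t) := fun t ht =>
    (isCompact_Icc.bddAbove_image hf).mono (image_mono (Icc_subset_Icc_right ht))
  have hg₀ : ∀ t ∈ Icc 0 T, 0 ≤ g t := fun t ht =>
    (hf₀ a ⟨le_rfl, ha.trans (ht.1.trans ht.2)⟩).trans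
      (le_csSup (hbdd t ht.2) (mem_image_of_mem f ⟨le_rfl, ha.trans ht.1⟩))
  have hmono : MonotoneOn g (Icc 0 T) :=
    (monotoneOn_sSup_image_Icc (hbdd T le_rfl)).mono (Icc_subset_Icc_left ha)
  have hCg : IntegrableOn (fun s => C * g s) (Icc 0 T) :=
    (hmono.integrableOn_isCompact isCompact_Icc).const_mul C
  have hCg₀ : ∀ s ∈ Icc 0 T, 0 ≤ C * g s := fun s hs => mul_nonneg hC (hg₀ s hs)
  have hg : ∀ t ∈ Icc 0 T, g t ≤ A + ∫ s in 0..t, C * g s := by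
    intro t ht
    refine csSup_le ((nonempty_Icc.2 (ha.trans ht.1)).image f) ?_
    rintro _ ⟨r, hr, rfl⟩
    rcases le_or_gt r 0 with hr₀ | hr₀
    · exact (hinit r ⟨hr.1, hr₀⟩).trans (le_add_of_nonneg_right
        (intervalIntegral.integral_nonneg ht.1 fun s hs => hCg₀ s ⟨hs.1, hs.2.trans ht.2⟩))
    · refine (hint r ⟨hr₀.le, hr.2.trans ht.2⟩).trans (add_le_add_right ?_ A)
      refine intervalIntegral.integral_mono_interval le_rfl hr₀.le hr.2 ?_
        ((intervalIntegrable_iff_integrableOn_Icc_of_le ht.1).2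
          (hCg.mono_set (Icc_subset_Icc_right ht.2)))
      filter_upwards [ae_restrict_mem measurableSet_Ioc] with s hs
      exact hCg₀ s ⟨hs.1.le, hs.2.trans ht.2⟩
  intro t ht
  simpa only [sub_zero] using
    le_mul_exp_of_le_add_integral hC (hmono.integrableOn_isCompact isCompact_Icc) hg t ht

theorem integrableOn_comp_sub {E : Type*} [NormedAddCommGroup E] {μ : Measure ℝ}
    [IsFiniteMeasureOnCompacts μ] {δ s : ℝ} {x : ℝ → E} (hx : ContinuousOn x (Icc (s - δ) s)) :
    IntegrableOn (fun u => x (s - u)) (Icc 0 δ) μ :=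
  (hx.comp (continuous_sub_left s).continuousOn fun _ hu =>
    ⟨sub_le_sub_left hu.2 s, sub_le_self s hu.1⟩).integrableOn_compact isCompact_Icc

theorem continuous_uncurry_of_norm_sub_le {E F G : Type*} [SeminormedAddCommGroup E]
    [SeminormedAddCommGroup F] [SeminormedAddCommGroup G] {b : E → F → G} {K : ℝ} (hK : 0 ≤ K)
    (hb : ∀ x x' y y', ‖b x y - b x' y'‖ ≤ K * (‖x - x'‖ + ‖y - y'‖)) :
    Continuous (Function.uncurry b) :=
  (LipschitzWith.of_dist_le' (K := 2 * K) fun p q => by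
    rw [dist_eq_norm, dist_eq_norm]
    calc ‖b p.1 p.2 - b q.1 q.2‖ ≤ K * (‖(p - q).1‖ + ‖(p - q).2‖) := hb _ _ _ _
      _ ≤ K * (‖p - q‖ + ‖p - q‖) := by gcongr <;> [exact norm_fst_le _; exact norm_snd_le _]
      _ = 2 * K * ‖p - q‖ := by ring).continuous

section Delay

variable {E : Type*} [NormedAddCommGroup E] [NormedSpace ℝ E] {μ : Measure ℝ} {δ : ℝ}

variable (μ δ) in
/-- The delay term `H(x(s - ·))`. -/
noncomputable def delay (x : ℝ → E) (s : ℝ) : E := ∫ u in Icc 0 δ, x (s - u) ∂μ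

theorem delay_congr {x y : ℝ → E} {s : ℝ} (h : EqOn x y (Icc (s - δ) s)) :
    delay μ δ x s = delay μ δ y s :=
  setIntegral_congr_fun measurableSet_Icc fun u hu => h ⟨by linarith [hu.2], by linarith [hu.1]⟩

theorem norm_delay_sub_le [IsFiniteMeasureOnCompacts μ] {x y : ℝ → E} {s M : ℝ}
    (hx : ContinuousOn x (Icc (s - δ) s)) (hy : ContinuousOn y (Icc (s - δ) s))
    (h : ∀ r ∈ Icc (s - δ) s, ‖x r - y r‖ ≤ M) :
    ‖delay μ δ x s - delay μ δ y s‖ ≤ μ.real (Icc 0 δ) * M := by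
  rw [delay, delay, ← integral_sub (integrableOn_comp_sub hx) (integrableOn_comp_sub hy), mul_comm]
  exact norm_setIntegral_le_of_norm_le_const isCompact_Icc.measure_lt_top fun u hu =>
    h _ ⟨by linarith [hu.2], by linarith [hu.1]⟩

theorem continuousOn_delay [IsFiniteMeasureOnCompacts μ] {x : ℝ → E} {T : ℝ} (hT : -δ ≤ T)
    (hx : ContinuousOn x (Icc (-δ) T)) : ContinuousOn (delay μ δ x) (Icc 0 T) := by
  set y : ℝ → E := fun r => x (projIcc (-δ) T hT r)
  have hy : Continuous y := hx.comp_continuous (continuous_subtype_val.comp continuous_projIcc)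
    fun r => (projIcc _ _ hT r).2
  refine (continuous_parametric_integral_of_continuous (f := fun s u => y (s - u))
    (by fun_prop) isCompact_Icc).continuousOn.congr fun s hs => delay_congr fun r hr => ?_
  simp only [y, projIcc_of_mem hT ⟨by linarith [hs.1, hr.1], hr.2.trans hs.2⟩]

structure IsDelaySolution (μ : Measure ℝ) (δ T : ℝ) (b : E → E → E) (φ x : ℝ → E) : Prop where
  continuousOn : ContinuousOn x (Icc (-δ) T)
  eqOn_initial : ∀ t ∈ Icc (-δ) 0, x t = φ t
  eq_integral : ∀ t ∈ Icc 0 T, x t = φ 0 + ∫ s in 0..t, b (x s) (delay μ δ x s)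

end Delay

namespace IsDelaySolution

variable {E : Type*} [NormedAddCommGroup E] [NormedSpace ℝ E] {μ : Measure ℝ}
  [IsFiniteMeasureOnCompacts μ] {δ T K : ℝ} {b : E → E → E} {φ φ' x x' : ℝ → E}

theorem intervalIntegrable_drift (hδ : 0 ≤ δ) (hb : Continuous (Function.uncurry b))
    (hx : IsDelaySolution μ δ T b φ x) {t : ℝ} (ht : t ∈ Icc 0 T) :
    IntervalIntegrable (fun s => b (x s) (delay μ δ x s)) volume 0 t := by
  have hsub : Icc 0 t ⊆ Icc (-δ) T := Icc_subset_Icc (neg_nonpos.2 hδ) ht.2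
  have hxt : ContinuousOn x (Icc (-δ) t) := hx.continuousOn.mono (Icc_subset_Icc_right ht.2)
  exact (hb.comp_continuousOn ((hx.continuousOn.mono hsub).prodMk
    (continuousOn_delay (by linarith [ht.1]) hxt))).intervalIntegrable_of_Icc ht.1

theorem sub_eq_add_integral_sub (hδ : 0 ≤ δ) (hb : Continuous (Function.uncurry b))
    (hx : IsDelaySolution μ δ T b φ x) (hx' : IsDelaySolution μ δ T b φ' x') {t : ℝ}
    (ht : t ∈ Icc 0 T) :
    x t - x' t = x 0 - x' 0 +
      ∫ s in 0..t, (b (x s) (delay μ δ x s) - b (x' s) (delay μ δ x' s)) := by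
  have h0 : (0 : ℝ) ∈ Icc 0 T := ⟨le_rfl, ht.1.trans ht.2⟩
  rw [hx.eq_integral t ht, hx'.eq_integral t ht, hx.eq_integral 0 h0, hx'.eq_integral 0 h0,
    intervalIntegral.integral_sub (hx.intervalIntegrable_drift hδ hb ht)
      (hx'.intervalIntegrable_drift hδ hb ht)]
  simp only [intervalIntegral.integral_same, add_zero]
  abel

theorem norm_drift_sub_le (hδ : 0 ≤ δ) (hK : 0 ≤ K)
    (hb : ∀ y y' z z', ‖b y z - b y' z'‖ ≤ K * (‖y - y'‖ + ‖z - z'‖))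
    (hx : IsDelaySolution μ δ T b φ x) (hx' : IsDelaySolution μ δ T b φ' x') {s : ℝ}
    (hs : s ∈ Icc 0 T) :
    ‖b (x s) (delay μ δ x s) - b (x' s) (delay μ δ x' s)‖ ≤
      K * (1 + μ.real (Icc 0 δ)) * sSup ((fun r => ‖x r - x' r‖) '' Icc (-δ) s) := by
  set M := sSup ((fun r => ‖x r - x' r‖) '' Icc (-δ) s)
  have hsub : Icc (-δ) s ⊆ Icc (-δ) T := Icc_subset_Icc_right hs.2
  have hle : ∀ r ∈ Icc (-δ) s, ‖x r - x' r‖ ≤ M := fun r hr =>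
    le_csSup (isCompact_Icc.bddAbove_image ((hx.continuousOn.sub hx'.continuousOn).norm.mono hsub))
      (mem_image_of_mem _ hr)
  have hdelay : Icc (s - δ) s ⊆ Icc (-δ) T :=
    (Icc_subset_Icc_left (by linarith [hs.1])).trans hsub
  calc ‖b (x s) (delay μ δ x s) - b (x' s) (delay μ δ x' s)‖
      ≤ K * (‖x s - x' s‖ + ‖delay μ δ x s - delay μ δ x' s‖) := hb _ _ _ _
    _ ≤ K * (M + μ.real (Icc 0 δ) * M) := by
      gcongr
      · exact hle s ⟨by linarith [hs.1], le_rfl⟩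
      · exact norm_delay_sub_le (hx.continuousOn.mono hdelay) (hx'.continuousOn.mono hdelay)
          fun r hr => hle r ⟨by linarith [hs.1, hr.1], hr.2⟩
    _ = K * (1 + μ.real (Icc 0 δ)) * M := by ring

theorem norm_sub_le_add_integral (hδ : 0 ≤ δ) (hK : 0 ≤ K)
    (hb : ∀ y y' z z', ‖b y z - b y' z'‖ ≤ K * (‖y - y'‖ + ‖z - z'‖))
    (hx : IsDelaySolution μ δ T b φ x) (hx' : IsDelaySolution μ δ T b φ' x') {t : ℝ}
    (ht : t ∈ Icc 0 T) :
    ‖x t - x' t‖ ≤ ‖x 0 - x' 0‖ + ∫ s in 0..t,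
      K * (1 + μ.real (Icc 0 δ)) * sSup ((fun r => ‖x r - x' r‖) '' Icc (-δ) s) := by
  have hmono := monotoneOn_sSup_image_Icc
    (isCompact_Icc.bddAbove_image (hx.continuousOn.sub hx'.continuousOn).norm)
  have hint : IntervalIntegrable (fun s => K * (1 + μ.real (Icc 0 δ)) *
      sSup ((fun r => ‖x r - x' r‖) '' Icc (-δ) s)) volume 0 t :=
    ((hmono.mono (uIcc_subset_Icc ⟨neg_nonpos.2 hδ, ht.1.trans ht.2⟩
      ⟨by linarith [ht.1], ht.2⟩)).intervalIntegrable).const_mul _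
  rw [sub_eq_add_integral_sub hδ (continuous_uncurry_of_norm_sub_le hK hb) hx hx' ht]
  refine (norm_add_le _ _).trans (add_le_add_right ?_ _)
  exact intervalIntegral.norm_integral_le_of_norm_le ht.1
    (ae_of_all _ fun s hs => norm_drift_sub_le hδ hK hb hx hx' ⟨hs.1.le, hs.2.trans ht.2⟩) hint

theorem norm_sub_le (hδ : 0 ≤ δ) (hT : 0 ≤ T) (hK : 0 ≤ K)
    (hb : ∀ y y' z z', ‖b y z - b y' z'‖ ≤ K * (‖y - y'‖ + ‖z - z'‖))
    (hx : IsDelaySolution μ δ T b φ x) (hx' : IsDelaySolution μ δ T b φ' x') :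
    ∀ t ∈ Icc (-δ) T, ‖x t - x' t‖ ≤
      exp (K * (1 + μ.real (Icc 0 δ)) * T) * sSup ((fun s => ‖φ s - φ' s‖) '' Icc (-δ) 0) := by
  set f := fun r => ‖x r - x' r‖
  have hf : ContinuousOn f (Icc (-δ) T) := (hx.continuousOn.sub hx'.continuousOn).norm
  have hbdd : BddAbove (f '' Icc (-δ) T) := isCompact_Icc.bddAbove_image hf
  have hφ : (fun s => ‖φ s - φ' s‖) '' Icc (-δ) 0 = f '' Icc (-δ) 0 :=
    image_congr fun s hs => by simp only [f, hx.eqOn_initial s hs, hx'.eqOn_initial s hs]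
  have hinit : ∀ t ∈ Icc (-δ) 0, f t ≤ sSup (f '' Icc (-δ) 0) := fun t ht =>
    le_csSup (hbdd.mono (image_mono (Icc_subset_Icc_right hT))) (mem_image_of_mem f ht)
  have hC : 0 ≤ K * (1 + μ.real (Icc 0 δ)) := by positivity
  intro t ht
  rw [hφ, mul_comm]
  calc f t ≤ sSup (f '' Icc (-δ) T) := le_csSup hbdd (mem_image_of_mem f ht)
    _ ≤ _ := sSup_image_Icc_le_mul_exp (neg_nonpos.2 hδ) hC hf (fun _ _ => norm_nonneg _) hinit
      (fun t ht => (norm_sub_le_add_integral hδ hK hb hx hx' ht).trans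
        (add_le_add_left (hinit 0 ⟨neg_nonpos.2 hδ, le_rfl⟩) _)) T ⟨hT, le_rfl⟩

end IsDelaySolution

theorem delay_ode_continuous_dependence_general
    (d : ℕ) (δ : ℝ) (hδ : 0 < δ)
    (μ : Measure ℝ) [IsFiniteMeasure μ]
    (K : ℝ) (hK : 0 ≤ K)
    (b : EuclideanSpace ℝ (Fin d) → EuclideanSpace ℝ (Fin d) → EuclideanSpace ℝ (Fin d))
    (hb : ∀ x x' y y' : EuclideanSpace ℝ (Fin d),
      ‖b x y - b x' y'‖ ≤ K * (‖x - x'‖ + ‖y - y'‖))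
    (φ φ' : ℝ → EuclideanSpace ℝ (Fin d))
    (x x' : ℝ → EuclideanSpace ℝ (Fin d))
    (hxc : ContinuousOn x (Icc (-δ) 1)) (hx'c : ContinuousOn x' (Icc (-δ) 1))
    (hxinit : ∀ t ∈ Icc (-δ) (0:ℝ), x t = φ t)
    (hx'init : ∀ t ∈ Icc (-δ) (0:ℝ), x' t = φ' t)
    (hxeq : ∀ t ∈ Icc (0:ℝ) 1,
      x t = φ 0 + ∫ s in (0:ℝ)..t, b (x s) (∫ u in Icc (0:ℝ) δ, x (s - u) ∂μ))
    (hx'eq : ∀ t ∈ Icc (0:ℝ) 1,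
      x' t = φ' 0 + ∫ s in (0:ℝ)..t, b (x' s) (∫ u in Icc (0:ℝ) δ, x' (s - u) ∂μ)) :
    ∀ t ∈ Icc (-δ) (1:ℝ),
      ‖x t - x' t‖ ≤ Real.exp (K * (1 + (μ (Icc (0:ℝ) δ)).toReal))
        * sSup ((fun s => ‖φ s - φ' s‖) '' Icc (-δ) (0:ℝ)) := by
  intro t ht
  simpa only [mul_one, measureReal_def] using IsDelaySolution.norm_sub_le hδ.le zero_le_one hK hb
    ⟨hxc, hxinit, hxeq⟩ ⟨hx'c, hx'init, hx'eq⟩ t ht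

/-- Continuous dependence on the initial path for the delay ordinary differential
equation with Lipschitz drift: the sup-distance of the two solutions on `[-δ,1]` is
controlled by `exp(K(1 + μ([0,δ])))` times the sup-distance of the initial paths. -/
theorem delay_ode_continuous_dependence
    (d : ℕ) (hd : 1 ≤ d) (δ : ℝ) (hδ : 0 < δ)
    (μ : Measure ℝ) [IsFiniteMeasure μ]
    (K : ℝ) (hK : 0 ≤ K)
    (b : EuclideanSpace ℝ (Fin d) → EuclideanSpace ℝ (Fin d) → EuclideanSpace ℝ (Fin d))
    (hb : ∀ x x' y y' : EuclideanSpace ℝ (Fin d),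
      ‖b x y - b x' y'‖ ≤ K * (‖x - x'‖ + ‖y - y'‖))
    (φ φ' : ℝ → EuclideanSpace ℝ (Fin d))
    (hφ : ContinuousOn φ (Icc (-δ) 0)) (hφ' : ContinuousOn φ' (Icc (-δ) 0))
    (x x' : ℝ → EuclideanSpace ℝ (Fin d))
    (hxc : ContinuousOn x (Icc (-δ) 1)) (hx'c : ContinuousOn x' (Icc (-δ) 1))
    (hxinit : ∀ t ∈ Icc (-δ) (0:ℝ), x t = φ t)
    (hx'init : ∀ t ∈ Icc (-δ) (0:ℝ), x' t = φ' t)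
    (hxeq : ∀ t ∈ Icc (0:ℝ) 1,
      x t = φ 0 + ∫ s in (0:ℝ)..t, b (x s) (∫ u in Icc (0:ℝ) δ, x (s - u) ∂μ))
    (hx'eq : ∀ t ∈ Icc (0:ℝ) 1,
      x' t = φ' 0 + ∫ s in (0:ℝ)..t, b (x' s) (∫ u in Icc (0:ℝ) δ, x' (s - u) ∂μ)) :
    ∀ t ∈ Icc (-δ) (1:ℝ),
      ‖x t - x' t‖ ≤ Real.exp (K * (1 + (μ (Icc (0:ℝ) δ)).toReal))
        * sSup ((fun s => ‖φ s - φ' s‖) '' Icc (-δ) (0:ℝ)) :=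
  delay_ode_continuous_dependence_general d δ hδ μ K hK b hb φ φ' x x' hxc hx'c hxinit hx'init hxeq
    hx'eq
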